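/- (Support-function domain identity.) For a nonempty set A ⊆ X* (take X = ℝⁿ), the closure of dom σ_A equals the negative polar of the recession cone of cl co A: cl(dom σ_A) = ([cl co A]_∞)⁻, where σ_A(x) = sup_{a∈A}⟨a, x⟩ and K⁻ = {x : ⟨k, x⟩ ≤ 0 ∀k ∈ K}. -/

import Mathlib

open Set
open scoped RealInnerProductSpace Pointwise

noncomputable section

abbrev E (n : ℕ) := EuclideanSpace ℝ (Fin n)

/-- Recession cone with the convention `[∅]_∞ = {0}`. -/
def recCone {X : Type*} [NormedAddCommGroup X] [InnerProductSpace ℝ X] (C : Set X) : Set X :=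
  {d | (C = ∅ ∧ d = 0) ∨ (C.Nonempty ∧ ∀ a ∈ C, a + d ∈ C)}

/-- Closed convex hull. -/
def clco {X : Type*} [NormedAddCommGroup X] [InnerProductSpace ℝ X] (A : Set X) : Set X :=
  closure (convexHull ℝ A)

/-- ε-normal set to `C` at `x`. -/
def eNormal {X : Type*} [NormedAddCommGroup X] [InnerProductSpace ℝ X]
    (C : Set X) (x : X) (ε : ℝ) : Set X :=
  {v | ∀ y ∈ C, ⟪v, y - x⟫ ≤ ε}

/-- ε-subdifferential of an extended-real-valued function, empty unless `f x` is finite. -/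
def eSubdiff {X : Type*} [NormedAddCommGroup X] [InnerProductSpace ℝ X]
    (f : X → EReal) (x : X) (ε : ℝ) : Set X :=
  {v | (∃ r : ℝ, f x = (r : EReal)) ∧
    ∀ y, ((⟪v, y - x⟫ : ℝ) : EReal) + f x ≤ f y + (ε : EReal)}

/-- Convexity of an extended-real-valued function, via its epigraph. -/
def EpiConvex {X : Type*} [NormedAddCommGroup X] [InnerProductSpace ℝ X]
    (f : X → EReal) : Prop :=
  Convex ℝ {p : X × ℝ | f p.1 ≤ (p.2 : EReal)}

/-- Properness of an extended-real-valued function. -/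
def EProper {X : Type*} (f : X → EReal) : Prop :=
  (∀ y, f y ≠ ⊥) ∧ ∃ y, f y ≠ ⊤

/-- Lower semicontinuous (closed) hull: supremum of all lsc minorants. -/
def clHull {X : Type*} [TopologicalSpace X] (f : X → EReal) : X → EReal :=
  fun x => sSup {r : EReal | ∃ g : X → EReal, LowerSemicontinuous g ∧ g ≤ f ∧ g x = r}

open Classical in
/-- Indicator function with values in `EReal`. -/
def eInd {X : Type*} (C : Set X) (x : X) : EReal := if x ∈ C then 0 else ⊤

/-- Support function of a set. -/
def suppFn {X : Type*} [NormedAddCommGroup X] [InnerProductSpace ℝ X]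
    (A : Set X) (x : X) : EReal := ⨆ a ∈ A, ((⟪a, x⟫ : ℝ) : EReal)

/-! The domain `D` of `σ_A` is a convex cone whose polar is `[cl co A]_∞`. If `d` is a recession
direction and `⟪·, x⟫` is bounded above on `A`, hence on `cl co A`, then `⟪d, x⟫ ≤ 0`, since
`⟪a + m • d, x⟫` stays bounded for all `m : ℕ`. Conversely, if `a + d ∉ cl co A`, a vector `v`
separating it from `cl co A` lies in `D` and has `⟪v, d⟫ > 0`. The bipolar theorem for the cone `D`
then gives `cl D = D⁻⁻ = ([cl co A]_∞)⁻`. -/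

variable {X : Type*} [NormedAddCommGroup X] [InnerProductSpace ℝ X]

def polarCone (S : Set X) : Set X := {x | ∀ k ∈ S, ⟪k, x⟫ ≤ 0}

lemma isClosed_polarCone (S : Set X) : IsClosed (polarCone S) := by
  have : polarCone S = ⋂ k ∈ S, {x | ⟪k, x⟫ ≤ 0} := by ext; simp [polarCone]
  exact this ▸ isClosed_biInter fun k _ => isClosed_le (by fun_prop) continuous_const

lemma subset_polarCone_polarCone (S : Set X) : S ⊆ polarCone (polarCone S) :=
  fun k hk x hx => real_inner_comm k x ▸ hx k hk

lemma closure_eq_polarCone_polarCone [CompleteSpace X] (K : PointedCone ℝ X) :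
    closure (K : Set X) = polarCone (polarCone K) := by
  refine (closure_minimal (subset_polarCone_polarCone _) (isClosed_polarCone _)).antisymm
    fun x hx => ?_
  by_contra hxK
  obtain ⟨y, hyK, hyx⟩ := ProperCone.hyperplane_separation' (C := Submodule.closure K) hxK
  have hy : -y ∈ polarCone K := fun k hk => by
    simpa [inner_neg_right] using hyK k (subset_closure hk)
  have := hx _ hy
  rw [inner_neg_left, real_inner_comm] at this
  linarith

lemma suppFn_ne_top_iff {A : Set X} {x : X} :
    suppFn A x ≠ ⊤ ↔ ∃ r : ℝ, ∀ a ∈ A, ⟪a, x⟫ ≤ r := by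
  have hle (r : ℝ) : suppFn A x ≤ r ↔ ∀ a ∈ A, ⟪a, x⟫ ≤ r := by
    simp only [suppFn, iSup₂_le_iff, EReal.coe_le_coe_iff]
  refine ⟨fun h => ?_, fun ⟨r, hr⟩ => ((hle r).2 hr |>.trans_lt (EReal.coe_lt_top r)).ne⟩
  obtain ⟨r, hr, -⟩ := EReal.lt_iff_exists_real_btwn.1 (lt_top_iff_ne_top.2 h)
  exact ⟨r, (hle r).1 hr.le⟩

def suppFnDomain (A : Set X) : PointedCone ℝ X where
  carrier := {x | suppFn A x ≠ ⊤}
  zero_mem' := suppFn_ne_top_iff.2 ⟨0, by simp⟩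
  add_mem' {x y} hx hy := by
    obtain ⟨r, hr⟩ := suppFn_ne_top_iff.1 hx
    obtain ⟨s, hs⟩ := suppFn_ne_top_iff.1 hy
    exact suppFn_ne_top_iff.2 ⟨r + s, fun a ha => by
      rw [inner_add_right]; exact add_le_add (hr a ha) (hs a ha)⟩
  smul_mem' c x hx := by
    obtain ⟨r, hr⟩ := suppFn_ne_top_iff.1 hx
    exact suppFn_ne_top_iff.2 ⟨c * r, fun a ha => by
      show ⟪a, (c : ℝ) • x⟫ ≤ c * r
      rw [real_inner_smul_right]; exact mul_le_mul_of_nonneg_left (hr a ha) c.2⟩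

lemma subset_clco (A : Set X) : A ⊆ clco A :=
  (subset_convexHull ℝ A).trans subset_closure

lemma inner_le_of_mem_clco {A : Set X} {x : X} {r : ℝ} (hr : ∀ a ∈ A, ⟪a, x⟫ ≤ r) :
    ∀ c ∈ clco A, ⟪c, x⟫ ≤ r := by
  have hclosed : IsClosed {c : X | ⟪c, x⟫ ≤ r} :=
    isClosed_le (continuous_id.inner continuous_const) continuous_const
  exact closure_minimal
    (convexHull_min hr (convex_halfSpace_le ((innerₗ X).flip x).isLinear r)) hclosed

lemma add_nsmul_mem_of_mem_recCone {C : Set X} {d a : X} (hd : d ∈ recCone C) (ha : a ∈ C)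
    (m : ℕ) : a + m • d ∈ C := by
  rcases hd with ⟨rfl, -⟩ | ⟨-, hd⟩
  · exact ha.elim
  induction m with
  | zero => simpa using ha
  | succ m ih => simpa [succ_nsmul, add_assoc] using hd _ ih

lemma inner_nonpos_of_mem_recCone {C : Set X} {d x : X} (hd : d ∈ recCone C) {r : ℝ}
    (hr : ∀ c ∈ C, ⟪c, x⟫ ≤ r) : ⟪d, x⟫ ≤ 0 := by
  rcases C.eq_empty_or_nonempty with rfl | ⟨a, ha⟩
  · rcases hd with ⟨-, rfl⟩ | ⟨⟨_, h⟩, -⟩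
    · simp
    · exact h.elim
  by_contra! hpos
  obtain ⟨m, hm⟩ := exists_nat_gt ((r - ⟪a, x⟫) / ⟪d, x⟫)
  have := hr _ (add_nsmul_mem_of_mem_recCone hd ha m)
  rw [inner_add_left, ← Nat.cast_smul_eq_nsmul ℝ, real_inner_smul_left] at this
  rw [div_lt_iff₀ hpos] at hm
  linarith

lemma geometric_hahn_banach_closed_point_inner [CompleteSpace X] {s : Set X} {y : X}
    (hs : Convex ℝ s) (hs' : IsClosed s) (hy : y ∉ s) :
    ∃ (v : X) (u : ℝ), (∀ c ∈ s, ⟪v, c⟫ < u) ∧ u < ⟪v, y⟫ := by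
  obtain ⟨f, u, hfu, huy⟩ := geometric_hahn_banach_closed_point hs hs' hy
  exact ⟨(InnerProductSpace.toDual ℝ X).symm f, u, by simpa using hfu, by simpa using huy⟩

lemma recCone_clco_eq_polarCone [CompleteSpace X] (A : Set X) :
    recCone (clco A) = polarCone (suppFnDomain A) := by
  refine Subset.antisymm (fun d hd x hx => ?_) fun d hd => ?_
  · obtain ⟨r, hr⟩ := suppFn_ne_top_iff.1 hx
    exact real_inner_comm x d ▸ inner_nonpos_of_mem_recCone hd (inner_le_of_mem_clco hr)
  rcases (clco A).eq_empty_or_nonempty with hA | hA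
  · have hd_dom : d ∈ suppFnDomain A := suppFn_ne_top_iff.2
      ⟨0, fun a ha => (hA.subset (subset_clco A ha)).elim⟩
    exact Or.inl ⟨hA, real_inner_self_nonpos.1 (hd d hd_dom)⟩
  refine Or.inr ⟨hA, fun a ha => ?_⟩
  by_contra had
  obtain ⟨v, u, hvu, huad⟩ := geometric_hahn_banach_closed_point_inner
    (convex_convexHull ℝ A).closure isClosed_closure had
  have hv : v ∈ suppFnDomain A := suppFn_ne_top_iff.2
    ⟨u, fun b hb => real_inner_comm v b ▸ (hvu b (subset_clco A hb)).le⟩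
  have := hd v hv
  rw [inner_add_right] at huad
  linarith [hvu a ha]

theorem stmt18_general {n : ℕ} (A : Set (E n)) :
    closure {x | suppFn A x ≠ ⊤} = {x | ∀ k ∈ recCone (clco A), ⟪k, x⟫ ≤ 0} := by
  change closure (suppFnDomain A : Set (E n)) = polarCone (recCone (clco A))
  rw [recCone_clco_eq_polarCone, closure_eq_polarCone_polarCone]

/-- `cl (dom σ_A) = ([cl co A]_∞)⁻` for a nonempty `A ⊆ ℝⁿ`. -/
theorem stmt18 {n : ℕ} (A : Set (E n)) (hA : A.Nonempty) :
    closure {x | suppFn A x ≠ ⊤} = {x | ∀ k ∈ recCone (clco A), ⟪k, x⟫ ≤ 0} :=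
  stmt18_general A
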